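/- Let μ₀ be a centered Gaussian measure on a separable Banach space B with Cameron–Martin space H, and let μ₁ and μ₂ be the pushforwards of μ₀ under translation by h₁ ∈ H and h₂ ∈ H respectively. Then the KL-divergence satisfies D_KL(μ₁‖μ₂) = (1/2)‖h₁ − h₂‖²_H, where ‖·‖_H is the Cameron–Martin norm. -/

import Mathlib

open MeasureTheory ProbabilityTheory

/-- KL divergence `D_KL(μ‖ν) = E_μ[log dμ/dν]`. -/
noncomputable def klDiv {α : Type*} [MeasurableSpace α] (μ ν : Measure α) : ℝ :=
  ∫ x, Real.log ((μ.rnDeriv ν) x).toReal ∂μ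

open MeasureTheory ProbabilityTheory Real
open scoped ENNReal NNReal
set_option linter.unusedSectionVars false

lemma integral_withDensity_ofReal {α : Type*} [MeasurableSpace α] {μ : Measure α}
    {r : α → ℝ} (hr : Measurable r) (hr0 : ∀ x, 0 ≤ r x) (g : α → ℝ) :
    ∫ x, g x ∂(μ.withDensity (fun x => ENNReal.ofReal (r x))) = ∫ x, r x * g x ∂μ := by
  rw [show (fun x => ENNReal.ofReal (r x)) = fun x => ((r x).toNNReal : ℝ≥0∞) from rfl,
    integral_withDensity_eq_integral_smul hr.real_toNNReal]
  congr 1; ext x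
  simp [NNReal.smul_def, Real.coe_toNNReal _ (hr0 x)]

lemma gaussianPDFReal_mul_exp {v : ℝ≥0} (hv : v ≠ 0) (x : ℝ) :
    gaussianPDFReal 0 v x * Real.exp x = Real.exp (v / 2) * gaussianPDFReal (v : ℝ) v x := by
  have hv' : (0:ℝ) < v := lt_of_le_of_ne v.coe_nonneg (by exact_mod_cast (Ne.symm hv))
  simp only [gaussianPDFReal]
  rw [mul_assoc, ← Real.exp_add, mul_left_comm, ← Real.exp_add]
  congr 1
  field_simp
  ring

lemma integrable_exp_gaussianReal (v : ℝ≥0) : Integrable Real.exp (gaussianReal 0 v) := by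
  rcases eq_or_ne v 0 with rfl | hv
  · rw [gaussianReal_zero_var]
    refine (integrable_const (Real.exp 0)).congr ?_
    rw [Filter.EventuallyEq, ae_dirac_eq]
    simp
  · rw [gaussianReal_of_var_ne_zero _ hv]
    rw [integrable_withDensity_iff (measurable_gaussianPDF _ _)
      (Filter.Eventually.of_forall fun x => ENNReal.ofReal_lt_top)]
    have : (fun x => Real.exp x * (gaussianPDF 0 v x).toReal)
        = fun x => Real.exp (v/2) * gaussianPDFReal (v : ℝ) v x := by
      ext x
      rw [gaussianPDF, ENNReal.toReal_ofReal (gaussianPDFReal_nonneg _ _ _), mul_comm,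
        gaussianPDFReal_mul_exp hv]
    rw [this]
    exact (integrable_gaussianPDFReal _ _).const_mul _

lemma integral_exp_gaussianReal (v : ℝ≥0) :
    ∫ t, Real.exp t ∂(gaussianReal 0 v) = Real.exp (v / 2) := by
  rcases eq_or_ne v 0 with rfl | hv
  · rw [gaussianReal_zero_var, integral_dirac]
    simp
  · rw [gaussianReal_of_var_ne_zero _ hv, gaussianPDF_def,
      integral_withDensity_ofReal (measurable_gaussianPDFReal _ _)
        (gaussianPDFReal_nonneg _ _) _]
    have : (fun x => gaussianPDFReal 0 v x * Real.exp x)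
        = fun x => Real.exp (v/2) * gaussianPDFReal (v : ℝ) v x := by
      ext x; rw [gaussianPDFReal_mul_exp hv]
    rw [this, integral_const_mul, integral_gaussianPDFReal_eq_one _ hv, mul_one]

lemma abs_exp_sub_one_le' (s : ℝ) : |Real.exp s - 1| ≤ |s| * Real.exp |s| := by
  rcases le_or_gt 0 s with hs | hs
  · rw [abs_of_nonneg hs, abs_of_nonneg (by linarith [Real.one_le_exp hs])]
    have h := mul_le_mul_of_nonneg_right (Real.add_one_le_exp (-s)) (Real.exp_pos s).le
    rw [← Real.exp_add, neg_add_cancel, Real.exp_zero] at h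
    nlinarith [Real.exp_pos s]
  · rw [abs_of_neg hs, abs_of_nonpos (by linarith [Real.exp_lt_one_iff.mpr hs] : Real.exp s - 1 ≤ 0)]
    have h1 := Real.add_one_le_exp s
    have h2 : (1:ℝ) ≤ Real.exp (-s) := Real.one_le_exp (by linarith)
    nlinarith

lemma abs_le_exp_add' (y : ℝ) : |y| ≤ Real.exp y + Real.exp (-y) := by
  rcases le_or_gt 0 y with hy | hy
  · rw [abs_of_nonneg hy]
    have := Real.add_one_le_exp y
    have := Real.exp_pos (-y)
    linarith
  · rw [abs_of_neg hy]
    have := Real.add_one_le_exp (-y)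
    have := Real.exp_pos y
    linarith

lemma key_bound' {q : ℝ} (y z : ℝ) (hq0 : 0 < q) (hq1 : q ≤ 1) :
    |(Real.exp (q * y) - 1) / q * Real.exp z|
      ≤ (Real.exp (2 * y) + Real.exp (-(2 * y))) * Real.exp z := by
  rw [abs_mul, Real.abs_exp]
  refine mul_le_mul_of_nonneg_right ?_ (Real.exp_pos z).le
  rw [abs_div, abs_of_pos hq0]
  have h1 : |Real.exp (q * y) - 1| ≤ |q * y| * Real.exp |q * y| := abs_exp_sub_one_le' _
  have h2 : |q * y| = q * |y| := by rw [abs_mul, abs_of_pos hq0]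
  have h3 : q * |y| ≤ |y| := by
    nlinarith [abs_nonneg y]
  have h4 : Real.exp (q * |y|) ≤ Real.exp |y| := Real.exp_le_exp.mpr h3
  have h5 : |Real.exp (q * y) - 1| / q ≤ |y| * Real.exp |y| := by
    rw [div_le_iff₀ hq0]
    calc |Real.exp (q * y) - 1| ≤ (q * |y|) * Real.exp (q * |y|) := by rw [← h2]; exact h1
      _ ≤ (q * |y|) * Real.exp |y| := by
          exact mul_le_mul_of_nonneg_left h4 (by positivity)
      _ = |y| * Real.exp |y| * q := by ring
  refine h5.trans ?_
  have h6 : |y| ≤ Real.exp |y| := by linarith [Real.add_one_le_exp |y|]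
  have h7 : |y| * Real.exp |y| ≤ Real.exp |y| * Real.exp |y| :=
    mul_le_mul_of_nonneg_right h6 (Real.exp_pos _).le
  rw [← Real.exp_add] at h7
  refine h7.trans ?_
  rcases le_or_gt 0 y with hy | hy
  · rw [abs_of_nonneg hy]
    have := Real.exp_pos (-(2*y))
    have : Real.exp (y + y) ≤ Real.exp (2*y) := Real.exp_le_exp.mpr (by linarith)
    linarith [Real.exp_pos (-(2*y))]
  · rw [abs_of_neg hy]
    have : Real.exp (-y + -y) ≤ Real.exp (-(2*y)) := Real.exp_le_exp.mpr (by linarith)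
    linarith [Real.exp_pos (2*y)]

section Pair

variable {B : Type*} [MeasurableSpace B] {H : Type*} [NormedAddCommGroup H]
  [InnerProductSpace ℝ H] {μ₀ : Measure B} {pair : H → B → ℝ}

lemma pair_exp_integrable (hmeas : ∀ h : H, Measurable (pair h))
    (hgauss : ∀ h : H, μ₀.map (pair h) = gaussianReal 0 (‖h‖₊ ^ 2)) (h : H) :
    Integrable (fun x => Real.exp (pair h x)) μ₀ := by
  have h0 := integrable_exp_gaussianReal (‖h‖₊ ^ 2)
  rw [← hgauss h, integrable_map_measure Real.continuous_exp.measurable.aestronglyMeasurable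
    (hmeas h).aemeasurable] at h0
  exact h0

lemma pair_exp_integral (hmeas : ∀ h : H, Measurable (pair h))
    (hgauss : ∀ h : H, μ₀.map (pair h) = gaussianReal 0 (‖h‖₊ ^ 2)) (h : H) :
    ∫ x, Real.exp (pair h x) ∂μ₀ = Real.exp (‖h‖ ^ 2 / 2) := by
  have h0 := integral_exp_gaussianReal (‖h‖₊ ^ 2)
  rw [← hgauss h, integral_map (hmeas h).aemeasurable
    Real.continuous_exp.measurable.aestronglyMeasurable] at h0
  rw [h0]
  norm_cast

variable (hlin : ∀ h₁ h₂ : H, ∀ᵐ x ∂μ₀, pair (h₁ - h₂) x = pair h₁ x - pair h₂ x)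
include hlin

lemma pair_add (a b : H) : ∀ᵐ x ∂μ₀, pair (a + b) x = pair a x + pair b x := by
  filter_upwards [hlin (a + b) b] with x hx
  rw [add_sub_cancel_right] at hx
  linarith

lemma pair_nsmul (n : ℕ) (a : H) : ∀ᵐ x ∂μ₀, pair ((n : ℝ) • a) x = n * pair a x := by
  induction n with
  | zero =>
    filter_upwards [hlin a a] with x hx
    simpa using hx
  | succ n ih =>
    filter_upwards [ih, pair_add hlin ((n : ℝ) • a) a] with x h1 h2
    have he : (((n + 1 : ℕ)) : ℝ) • a = (n : ℝ) • a + a := by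
      push_cast
      rw [add_smul, one_smul]
    rw [he, h2, h1]
    push_cast
    ring

lemma pair_inv_smul (n : ℕ) (a : H) :
    ∀ᵐ x ∂μ₀, pair (((n : ℝ) + 1)⁻¹ • a) x = ((n : ℝ) + 1)⁻¹ * pair a x := by
  have hn : ((n : ℝ) + 1) ≠ 0 := by positivity
  filter_upwards [pair_nsmul hlin (n + 1) (((n : ℝ) + 1)⁻¹ • a)] with x hx
  have h1 : (((n + 1 : ℕ)) : ℝ) • (((n : ℝ) + 1)⁻¹ • a) = a := by
    rw [smul_smul]
    push_cast
    rw [mul_inv_cancel₀ hn, one_smul]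
  rw [h1] at hx
  rw [hx]
  push_cast
  field_simp

end Pair

section Pair2

variable {B : Type*} [MeasurableSpace B] {H : Type*} [NormedAddCommGroup H]
  [InnerProductSpace ℝ H] {μ₀ : Measure B} {pair : H → B → ℝ}
  (hmeas : ∀ h : H, Measurable (pair h))
  (hgauss : ∀ h : H, μ₀.map (pair h) = gaussianReal 0 (‖h‖₊ ^ 2))
  (hlin : ∀ h₁ h₂ : H, ∀ᵐ x ∂μ₀, pair (h₁ - h₂) x = pair h₁ x - pair h₂ x)
include hmeas hgauss hlin

lemma pair_mul_exp_integrable (a b : H) :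
    Integrable (fun x => pair a x * Real.exp (pair b x)) μ₀ := by
  refine Integrable.mono'
    ((pair_exp_integrable hmeas hgauss (a + b)).add (pair_exp_integrable hmeas hgauss (b - a)))
    (((hmeas a).aestronglyMeasurable).mul
      ((Real.measurable_exp.comp (hmeas b)).aestronglyMeasurable)) ?_
  filter_upwards [pair_add hlin a b, hlin b a] with x h1 h2
  rw [norm_mul, Real.norm_eq_abs, Real.norm_eq_abs, Real.abs_exp]
  calc |pair a x| * Real.exp (pair b x)
      ≤ (Real.exp (pair a x) + Real.exp (-pair a x)) * Real.exp (pair b x) :=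
        mul_le_mul_of_nonneg_right (abs_le_exp_add' _) (Real.exp_pos _).le
    _ = Real.exp (pair (a + b) x) + Real.exp (pair (b - a) x) := by
        rw [add_mul, ← Real.exp_add, ← Real.exp_add, h1, h2]
        ring_nf

lemma pair_mul_exp_integral (a b : H) :
    ∫ x, pair a x * Real.exp (pair b x) ∂μ₀
      = (inner ℝ a b : ℝ) * Real.exp (‖b‖ ^ 2 / 2) := by
  set c : ℕ → ℝ := fun n => ((n : ℝ) + 1)⁻¹ with hc
  have hc_pos : ∀ n, 0 < c n := fun n => by positivity
  have hc_ne : ∀ n, c n ≠ 0 := fun n => (hc_pos n).ne'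
  have hc_le : ∀ n, c n ≤ 1 := fun n => by
    rw [hc]
    exact inv_le_one_of_one_le₀ (by push_cast; linarith [Nat.cast_nonneg (α := ℝ) n])
  have hc_tendsto : Filter.Tendsto c Filter.atTop (nhds 0) := by
    have := tendsto_one_div_add_atTop_nhds_zero_nat (𝕜 := ℝ)
    simpa [hc, one_div] using this
  have hc_tendsto' : Filter.Tendsto c Filter.atTop (nhdsWithin 0 {(0:ℝ)}ᶜ) :=
    tendsto_nhdsWithin_of_tendsto_nhds_of_eventually_within _ hc_tendsto
      (Filter.Eventually.of_forall fun n => hc_ne n)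
  set F : ℕ → B → ℝ := fun n x =>
    (Real.exp (c n * pair a x) - 1) / c n * Real.exp (pair b x) with hF
  set bound : B → ℝ := fun x =>
    Real.exp (pair ((2:ℕ) • a + b) x) + Real.exp (pair (b - (2:ℕ) • a) x) with hbd
  -- DCT
  have hFmeas : ∀ n, AEStronglyMeasurable (F n) μ₀ := fun n =>
    ((((hmeas a).const_mul (c n)).exp.sub_const 1).div_const (c n)).aestronglyMeasurable.mul
      ((hmeas b).exp).aestronglyMeasurable
  have hsmul2 : ∀ᵐ x ∂μ₀, pair ((2:ℕ) • a) x = 2 * pair a x := by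
    filter_upwards [pair_nsmul hlin 2 a] with x hx
    rw [show ((2:ℕ):ℝ) • a = (2:ℕ) • a by push_cast; simp [two_smul, two_mul]] at hx
    simpa using hx
  have hbound_int : Integrable bound μ₀ :=
    (pair_exp_integrable hmeas hgauss _).add (pair_exp_integrable hmeas hgauss _)
  have hbound : ∀ n, ∀ᵐ x ∂μ₀, ‖F n x‖ ≤ bound x := by
    intro n
    filter_upwards [pair_add hlin ((2:ℕ) • a) b, hlin b ((2:ℕ) • a), hsmul2] with x h1 h2 h3
    rw [hF, Real.norm_eq_abs]
    calc |(Real.exp (c n * pair a x) - 1) / c n * Real.exp (pair b x)|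
        ≤ (Real.exp (2 * pair a x) + Real.exp (-(2 * pair a x))) * Real.exp (pair b x) :=
          key_bound' _ _ (hc_pos n) (hc_le n)
      _ = bound x := by
          simp only [hbd]
          rw [add_mul, ← Real.exp_add, ← Real.exp_add, h1, h2, h3]
          ring_nf
  have hlim : ∀ᵐ x ∂μ₀,
      Filter.Tendsto (fun n => F n x) Filter.atTop (nhds (pair a x * Real.exp (pair b x))) := by
    refine Filter.Eventually.of_forall fun x => ?_
    have hd : HasDerivAt (fun t : ℝ => Real.exp (t * pair a x)) (pair a x) 0 := by
      have := (Real.hasDerivAt_exp ((0:ℝ) * pair a x)).comp 0 (hasDerivAt_mul_const (pair a x))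
      simpa [Function.comp_def] using this
    rw [hasDerivAt_iff_tendsto_slope] at hd
    have := (hd.comp hc_tendsto').mul_const (Real.exp (pair b x))
    refine this.congr fun n => ?_
    simp only [hF, Function.comp_apply, slope_def_field]
    rw [zero_mul, Real.exp_zero, sub_zero]
  have key := tendsto_integral_of_dominated_convergence bound hFmeas hbound_int hbound hlim
  -- compute ∫ F n
  have hFn : ∀ n, ∫ x, F n x ∂μ₀
      = (Real.exp (‖c n • a + b‖ ^ 2 / 2) - Real.exp (‖b‖ ^ 2 / 2)) / c n := by
    intro n
    have hcongr : ∀ᵐ x ∂μ₀, F n x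
        = (Real.exp (pair (c n • a + b) x) - Real.exp (pair b x)) / c n := by
      filter_upwards [pair_inv_smul hlin n a, pair_add hlin (c n • a) b] with x h1 h2
      simp only [hF]
      have h3 : pair (c n • a + b) x = c n * pair a x + pair b x := by rw [h2, h1]
      rw [h3, Real.exp_add, div_mul_eq_mul_div, sub_mul, one_mul]
    rw [integral_congr_ae hcongr]
    rw [integral_div, integral_sub (pair_exp_integrable hmeas hgauss _)
      (pair_exp_integrable hmeas hgauss _), pair_exp_integral hmeas hgauss,
      pair_exp_integral hmeas hgauss]
  -- the limit of the RHS
  set G : ℝ → ℝ := fun t =>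
    Real.exp (t ^ 2 * (‖a‖ ^ 2 / 2) + t * (inner ℝ a b : ℝ) + ‖b‖ ^ 2 / 2) with hG
  have hnorm : ∀ t : ℝ, ‖t • a + b‖ ^ 2 / 2
      = t ^ 2 * (‖a‖ ^ 2 / 2) + t * (inner ℝ a b : ℝ) + ‖b‖ ^ 2 / 2 := by
    intro t
    rw [norm_add_sq_real, real_inner_smul_left, norm_smul, mul_pow]
    simp [sq_abs]
    ring
  have hGd : HasDerivAt G ((inner ℝ a b : ℝ) * Real.exp (‖b‖ ^ 2 / 2)) 0 := by
    have hP : HasDerivAt (fun t : ℝ => t ^ 2 * (‖a‖ ^ 2 / 2) + t * (inner ℝ a b : ℝ) + ‖b‖ ^ 2 / 2)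
        ((inner ℝ a b : ℝ)) 0 := by
      have h1 := ((hasDerivAt_pow 2 (0:ℝ)).mul_const (‖a‖ ^ 2 / 2)).add
        ((hasDerivAt_id (0:ℝ)).mul_const (inner ℝ a b : ℝ))
      have h2 := h1.add_const (‖b‖ ^ 2 / 2)
      simpa using h2
    have h4 := (Real.hasDerivAt_exp _).comp 0 hP
    simpa [hG, Function.comp_def, mul_comm] using h4
  rw [hasDerivAt_iff_tendsto_slope] at hGd
  have hGlim : Filter.Tendsto (fun n => ∫ x, F n x ∂μ₀) Filter.atTop
      (nhds ((inner ℝ a b : ℝ) * Real.exp (‖b‖ ^ 2 / 2))) := by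
    refine (hGd.comp hc_tendsto').congr fun n => ?_
    simp only [Function.comp_apply, slope_def_field]
    rw [hFn n, hnorm]
    simp only [hG, sub_zero]
    norm_num
  exact tendsto_nhds_unique key hGlim

end Pair2

/-- For a centered Gaussian measure `μ₀` on a separable Banach space `B` with
Cameron–Martin space `H` (embedded via `ι`, with Paley–Wiener pairing `pair` such that the
Cameron–Martin density formula holds), the KL divergence between the shifts of `μ₀` by
`h₁, h₂ ∈ H` equals `(1/2)‖h₁ - h₂‖²`. -/
theorem kl_between_shift_measures
    {B : Type*} [NormedAddCommGroup B] [NormedSpace ℝ B] [MeasurableSpace B] [BorelSpace B]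
    [TopologicalSpace.SeparableSpace B] [CompleteSpace B]
    {H : Type*} [NormedAddCommGroup H] [InnerProductSpace ℝ H]
    (μ₀ : Measure B) [IsProbabilityMeasure μ₀]
    -- μ₀ is a centered Gaussian measure: every continuous linear functional pushes it to a
    -- centered real Gaussian
    (hgauss : ∀ ℓ : B →L[ℝ] ℝ, ∃ v : NNReal, μ₀.map ℓ = gaussianReal 0 v)
    -- the Cameron–Martin space embeds linearly in B
    (ι : H →ₗ[ℝ] B) (hι : Function.Injective ι)
    -- the Paley–Wiener pairing h ↦ h^*, linear in h, centered Gaussian with variance ‖h‖²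
    (pair : H → B → ℝ)
    (hpair_meas : ∀ h : H, Measurable (pair h))
    (hpair_gauss : ∀ h : H, μ₀.map (pair h) = gaussianReal 0 (‖h‖₊ ^ 2))
    (hpair_lin : ∀ h₁ h₂ : H, ∀ᵐ x ∂μ₀, pair (h₁ - h₂) x = pair h₁ x - pair h₂ x)
    (hpair_inner : ∀ h₁ h₂ : H, ∫ x, pair h₁ x * pair h₂ x ∂μ₀ = inner ℝ h₁ h₂)
    -- the Cameron–Martin theorem: the shift of μ₀ by ι h is absolutely continuous w.r.t. μ₀
    -- with the Cameron–Martin density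
    (hCM : ∀ h : H,
      (μ₀.map (fun x => x + ι h)) ≪ μ₀ ∧
      (μ₀.map (fun x => x + ι h)).rnDeriv μ₀ =ᵐ[μ₀]
        fun x => ENNReal.ofReal (Real.exp (pair h x - ‖h‖ ^ 2 / 2)))
    (h₁ h₂ : H) :
    klDiv (μ₀.map (fun x => x + ι h₁)) (μ₀.map (fun x => x + ι h₂))
      = (1 / 2) * ‖h₁ - h₂‖ ^ 2 := by
  obtain ⟨hac₁, hd₁⟩ := hCM h₁
  obtain ⟨hac₂, hd₂⟩ := hCM h₂
  have hT₁ : Measurable (fun x : B => x + ι h₁) := measurable_add_const _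
  have hT₂ : Measurable (fun x : B => x + ι h₂) := measurable_add_const _
  haveI : IsProbabilityMeasure (μ₀.map (fun x => x + ι h₁)) :=
    Measure.isProbabilityMeasure_map hT₁.aemeasurable
  haveI : IsProbabilityMeasure (μ₀.map (fun x => x + ι h₂)) :=
    Measure.isProbabilityMeasure_map hT₂.aemeasurable
  set C : ℝ := (‖h₁‖ ^ 2 - ‖h₂‖ ^ 2) / 2 with hC
  set g : B → ℝ≥0∞ := fun x =>
    ENNReal.ofReal (Real.exp (pair h₁ x - pair h₂ x - C)) with hg
  have hf1meas : Measurable fun x =>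
      ENNReal.ofReal (Real.exp (pair h₁ x - ‖h₁‖ ^ 2 / 2)) :=
    ENNReal.measurable_ofReal.comp ((hpair_meas h₁).sub_const _).exp
  have hf2meas : Measurable fun x =>
      ENNReal.ofReal (Real.exp (pair h₂ x - ‖h₂‖ ^ 2 / 2)) :=
    ENNReal.measurable_ofReal.comp ((hpair_meas h₂).sub_const _).exp
  have hgmeas : Measurable g :=
    ENNReal.measurable_ofReal.comp (((hpair_meas h₁).sub (hpair_meas h₂)).sub_const _).exp
  have hμ₁ : μ₀.map (fun x => x + ι h₁)
      = μ₀.withDensity (fun x => ENNReal.ofReal (Real.exp (pair h₁ x - ‖h₁‖ ^ 2 / 2))) := by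
    conv_lhs => rw [← Measure.withDensity_rnDeriv_eq _ μ₀ hac₁]
    exact withDensity_congr_ae hd₁
  have hμ₂ : μ₀.map (fun x => x + ι h₂)
      = μ₀.withDensity (fun x => ENNReal.ofReal (Real.exp (pair h₂ x - ‖h₂‖ ^ 2 / 2))) := by
    conv_lhs => rw [← Measure.withDensity_rnDeriv_eq _ μ₀ hac₂]
    exact withDensity_congr_ae hd₂
  have hmul : (fun x => ENNReal.ofReal (Real.exp (pair h₂ x - ‖h₂‖ ^ 2 / 2))) * g
      = fun x => ENNReal.ofReal (Real.exp (pair h₁ x - ‖h₁‖ ^ 2 / 2)) := by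
    funext x
    simp only [Pi.mul_apply, hg]
    rw [← ENNReal.ofReal_mul (Real.exp_nonneg _), ← Real.exp_add]
    congr 2
    rw [hC]
    ring
  have hμ₁' : (μ₀.map (fun x => x + ι h₂)).withDensity g = μ₀.map (fun x => x + ι h₁) := by
    rw [hμ₂, ← MeasureTheory.withDensity_mul μ₀ hf2meas hgmeas, hmul, ← hμ₁]
  have hrn : (μ₀.map (fun x => x + ι h₁)).rnDeriv (μ₀.map (fun x => x + ι h₂))
      =ᵐ[μ₀.map (fun x => x + ι h₁)] g := by
    have h5 : (μ₀.map (fun x => x + ι h₁)).rnDeriv (μ₀.map (fun x => x + ι h₂))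
        =ᵐ[μ₀.map (fun x => x + ι h₂)] g := by
      conv_lhs => rw [← hμ₁']
      exact Measure.rnDeriv_withDensity _ hgmeas
    have habs : μ₀.map (fun x => x + ι h₁) ≪ μ₀.map (fun x => x + ι h₂) :=
      hμ₁' ▸ withDensity_absolutelyContinuous _ g
    exact h5.filter_mono habs.ae_le
  have hstep : klDiv (μ₀.map (fun x => x + ι h₁)) (μ₀.map (fun x => x + ι h₂))
      = ∫ x, (pair h₁ x - pair h₂ x - C) ∂(μ₀.map (fun x => x + ι h₁)) := by
    refine integral_congr_ae ?_
    filter_upwards [hrn] with x hx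
    rw [hx, hg, ENNReal.toReal_ofReal (Real.exp_nonneg _), Real.log_exp]
  rw [hstep, hμ₁,
    integral_withDensity_ofReal ((hpair_meas h₁).sub_const _).exp
      (fun x => Real.exp_nonneg _) _]
  have hpoint : (fun x => Real.exp (pair h₁ x - ‖h₁‖ ^ 2 / 2) * (pair h₁ x - pair h₂ x - C))
      = fun x => Real.exp (-(‖h₁‖ ^ 2 / 2)) *
          (pair h₁ x * Real.exp (pair h₁ x) - pair h₂ x * Real.exp (pair h₁ x)
            - C * Real.exp (pair h₁ x)) := by
    funext x
    rw [Real.exp_sub, Real.exp_neg]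
    field_simp
  have I1 : Integrable (fun x => pair h₁ x * Real.exp (pair h₁ x)) μ₀ :=
    pair_mul_exp_integrable hpair_meas hpair_gauss hpair_lin h₁ h₁
  have I2 : Integrable (fun x => pair h₂ x * Real.exp (pair h₁ x)) μ₀ :=
    pair_mul_exp_integrable hpair_meas hpair_gauss hpair_lin h₂ h₁
  have I12 : Integrable
      (fun x => pair h₁ x * Real.exp (pair h₁ x) - pair h₂ x * Real.exp (pair h₁ x)) μ₀ :=
    I1.sub I2
  have IC : Integrable (fun x => C * Real.exp (pair h₁ x)) μ₀ :=
    (pair_exp_integrable hpair_meas hpair_gauss h₁).const_mul C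
  rw [hpoint, integral_const_mul, integral_sub I12 IC, integral_sub I1 I2,
    pair_mul_exp_integral hpair_meas hpair_gauss hpair_lin h₁ h₁,
    pair_mul_exp_integral hpair_meas hpair_gauss hpair_lin h₂ h₁,
    integral_const_mul, pair_exp_integral hpair_meas hpair_gauss h₁]
  have hee : Real.exp (-(‖h₁‖ ^ 2 / 2)) * Real.exp (‖h₁‖ ^ 2 / 2) = 1 := by
    rw [← Real.exp_add]
    simp
  have hinner1 : (inner ℝ h₁ h₁ : ℝ) = ‖h₁‖ ^ 2 := real_inner_self_eq_norm_sq h₁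
  have hnormsub : ‖h₁ - h₂‖ ^ 2 = ‖h₁‖ ^ 2 - 2 * (inner ℝ h₁ h₂ : ℝ) + ‖h₂‖ ^ 2 :=
    norm_sub_sq_real h₁ h₂
  have hinner2 : (inner ℝ h₂ h₁ : ℝ) = (inner ℝ h₁ h₂ : ℝ) := real_inner_comm h₁ h₂
  rw [hinner1, hinner2, hC]
  nlinarith [hee, Real.exp_pos (‖h₁‖ ^ 2 / 2), Real.exp_pos (-(‖h₁‖ ^ 2 / 2)), hnormsub]
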